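/- arXiv:0709.2720 — 3 statements merged into one kernel-verified Lean document; each statement's English description precedes it below -/
import Mathlib

section
/- Let G act on the right on N and let f ∈ (𝔤* ⊗ C^∞(N))^G, i.e. f : 𝔤 → C^∞(N) is linear with f(Ad_g ξ)(x) = f(ξ)(x·g). Define λ ∈ Ω^1(N × G) by λ(v_x, L_{g*}ξ) = f(Ad_g ξ)(x). Then Ψ(df) = dλ, where Ψ(df) is the 2-form on N × G given by Ψ(df)((v_1, L_{g*}ξ_1),(v_2, L_{g*}ξ_2)) = (df(ξ_2))(v_1·g) − (df(ξ_1))(v_2·g) + f(Ad_g[ξ_1,ξ_2])(x). -/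
open Manifold

section BCWZ

variable {𝔤 : Type*} [NormedAddCommGroup 𝔤] [NormedSpace ℝ 𝔤]
  {G : Type*} [TopologicalSpace G] [ChartedSpace 𝔤 G] [Group G]
  [IsTopologicalGroup G] [LieGroup 𝓘(ℝ, 𝔤) (⊤ : ℕ∞) G]
  {E : Type*} [NormedAddCommGroup E] [NormedSpace ℝ E]
  {N : Type*} [TopologicalSpace N] [ChartedSpace E N]
  [IsManifold 𝓘(ℝ, E) (⊤ : ℕ∞) N]

/-- The adjoint action `Ad_g ξ`: the derivative at the identity of conjugation by `g`. -/
noncomputable def Adj (G : Type*) [TopologicalSpace G] [ChartedSpace 𝔤 G] [Group G]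
    (g : G) (ξ : 𝔤) : 𝔤 :=
  mfderiv 𝓘(ℝ, 𝔤) 𝓘(ℝ, 𝔤) (fun h : G => g * h * g⁻¹) 1 ξ

/-- Left translation `L_{g*} ξ` of `ξ ∈ 𝔤 = T₁G` to `T_g G ≅ 𝔤`. -/
noncomputable def leftTrans (G : Type*) [TopologicalSpace G] [ChartedSpace 𝔤 G] [Group G]
    (g : G) (ξ : 𝔤) : 𝔤 :=
  mfderiv 𝓘(ℝ, 𝔤) 𝓘(ℝ, 𝔤) (fun h : G => g * h) 1 ξ

/-- The derivative `v ⋆ g` of the right translation `R_g = a · g : N → N`. -/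
noncomputable def actDeriv (a : N → G → N) (g : G) (x : N) (v : E) : E :=
  mfderiv 𝓘(ℝ, E) 𝓘(ℝ, E) (fun y : N => a y g) x v

/-- Derivative at `0` of the first-variable curve `s ↦ σ (s, t₀)` of a surface
`σ : ℝ² → N × G`, as a tangent vector of `N × G` (identified with `E × 𝔤`). -/
noncomputable def surfD₁ (σ : ℝ × ℝ → N × G) (q : ℝ × ℝ) : E × 𝔤 :=
  mfderiv 𝓘(ℝ, ℝ) ((𝓘(ℝ, E)).prod 𝓘(ℝ, 𝔤)) (fun s => σ (s, q.2)) q.1 (1 : ℝ)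

/-- Derivative of the second-variable curve `t ↦ σ (s₀, t)`. -/
noncomputable def surfD₂ (σ : ℝ × ℝ → N × G) (q : ℝ × ℝ) : E × 𝔤 :=
  mfderiv 𝓘(ℝ, ℝ) ((𝓘(ℝ, E)).prod 𝓘(ℝ, 𝔤)) (fun t => σ (q.1, t)) q.2 (1 : ℝ)

/-- The differential of a real function, evaluated on a tangent vector. -/
noncomputable def dfun (h : N → ℝ) (x : N) (v : E) : ℝ :=
  mfderiv 𝓘(ℝ, E) 𝓘(ℝ, ℝ) h x v

/-! ### Auxiliary lemmas -/

section Aux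

open Set

/-- Existence of a smooth surface through a point of a boundaryless manifold with
prescribed partial derivatives at the origin. -/
lemma bcwz_exists_good_surface {F : Type*} [NormedAddCommGroup F] [NormedSpace ℝ F]
    {M : Type*} [TopologicalSpace M] [ChartedSpace F M]
    [IsManifold 𝓘(ℝ, F) (⊤ : ℕ∞) M] (p : M) (w₁ w₂ : F) :
    ∃ c : ℝ × ℝ → M, ContMDiff ((𝓘(ℝ, ℝ)).prod 𝓘(ℝ, ℝ)) 𝓘(ℝ, F) (⊤ : ℕ∞) c ∧ c (0,0) = p ∧
      mfderiv 𝓘(ℝ, ℝ) 𝓘(ℝ, F) (fun s => c (s,0)) 0 (1 : ℝ) = w₁ ∧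
      mfderiv 𝓘(ℝ, ℝ) 𝓘(ℝ, F) (fun t => c (0,t)) 0 (1 : ℝ) = w₂ := by
  classical
  set e := extChartAt 𝓘(ℝ, F) p with he
  have hps : p ∈ e.source := mem_extChartAt_source p
  have htgt : IsOpen e.target := isOpen_extChartAt_target p
  have hpe : e p ∈ e.target := e.map_source hps
  obtain ⟨ε, hε, hball⟩ := Metric.isOpen_iff.1 htgt _ hpe
  set A := mfderiv 𝓘(ℝ, F) 𝓘(ℝ, F) e p with hA
  set a₁ : F := A w₁ with ha₁
  set a₂ : F := A w₂ with ha₂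
  set R : ℝ := ‖a₁‖ + ‖a₂‖ + 1 with hR
  have hRpos : 0 < R := by positivity
  set δ : ℝ := ε / (2 * R) with hδ
  have hδpos : 0 < δ := by positivity
  set ρ : ℝ → ℝ := fun u => δ * Real.sin (u / δ) with hρ
  have hρ0 : ρ 0 = 0 := by simp [hρ]
  have hρbound : ∀ u, |ρ u| ≤ δ := by
    intro u
    have h1 : |Real.sin (u / δ)| ≤ 1 := Real.abs_sin_le_one _
    calc |ρ u| = |δ| * |Real.sin (u / δ)| := by rw [hρ, abs_mul]
    _ ≤ |δ| * 1 := by gcongr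
    _ = δ := by rw [mul_one, abs_of_pos hδpos]
  have hρsmooth : ContMDiff 𝓘(ℝ, ℝ) 𝓘(ℝ, ℝ) (⊤ : ℕ∞) ρ := by
    rw [contMDiff_iff_contDiff]
    exact contDiff_const.mul (Real.contDiff_sin.comp (contDiff_id.div_const δ))
  have hρderiv : HasDerivAt ρ 1 0 := by
    have h1 : HasDerivAt (fun u : ℝ => u / δ) (1 / δ) 0 := (hasDerivAt_id 0).div_const δ
    have h2 : HasDerivAt Real.sin 1 ((0 : ℝ) / δ) := by
      simpa using Real.hasDerivAt_sin ((0:ℝ)/δ)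
    have h3 := (h2.comp 0 h1).const_mul δ
    exact h3.congr_deriv (by field_simp)
  -- the surface in chart coordinates
  set u : ℝ × ℝ → F := fun q => e p + ρ q.1 • a₁ + ρ q.2 • a₂ with hu
  have humem : ∀ q, u q ∈ e.target := by
    intro q
    apply hball
    have : ‖u q - e p‖ ≤ δ * ‖a₁‖ + δ * ‖a₂‖ := by
      have : u q - e p = ρ q.1 • a₁ + ρ q.2 • a₂ := by rw [hu]; simp only [add_assoc, add_sub_cancel_left]
      rw [this]
      refine (norm_add_le _ _).trans ?_
      gcongr <;> rw [norm_smul] <;>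
        exact mul_le_mul_of_nonneg_right ((Real.norm_eq_abs _) ▸ hρbound _) (norm_nonneg _)
    rw [Metric.mem_ball, dist_eq_norm]
    calc ‖u q - e p‖ ≤ δ * ‖a₁‖ + δ * ‖a₂‖ := this
    _ = δ * (‖a₁‖ + ‖a₂‖) := by ring
    _ < δ * R := by
        apply mul_lt_mul_of_pos_left _ hδpos
        rw [hR]; linarith
    _ = ε / 2 := by rw [hδ]; field_simp
    _ < ε := by linarith
  have husmooth : ContMDiff ((𝓘(ℝ, ℝ)).prod 𝓘(ℝ, ℝ)) 𝓘(ℝ, F) (⊤ : ℕ∞) u := by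
    apply ContMDiff.add
    apply ContMDiff.add contMDiff_const
    · exact (hρsmooth.comp contMDiff_fst).smul contMDiff_const
    · exact (hρsmooth.comp contMDiff_snd).smul contMDiff_const
  -- the surface
  refine ⟨fun q => e.symm (u q), ?_, ?_, ?_, ?_⟩
  · exact (contMDiffOn_extChartAt_symm p).comp_contMDiff husmooth humem
  · have h1 : u (0,0) = e p := by
      show e p + ρ 0 • a₁ + ρ 0 • a₂ = e p
      rw [hρ0]; simp
    show e.symm (u (0,0)) = p
    rw [h1, he]
    exact (extChartAt 𝓘(ℝ, F) p).left_inv hps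
  · -- first partial derivative
    have hcurve : (fun s => e.symm (u (s, 0))) = e.symm ∘ (fun s => e p + ρ s • a₁) := by
      funext s
      show e.symm (e p + ρ s • a₁ + ρ 0 • a₂) = _
      rw [hρ0]; simp
    have hv₁ : HasDerivAt (fun s => e p + ρ s • a₁) a₁ 0 := by
      simpa using (hρderiv.smul_const a₁).const_add (e p)
    have hsymm : MDifferentiableAt 𝓘(ℝ, F) 𝓘(ℝ, F) e.symm (e p) :=
      ((contMDiffOn_extChartAt_symm p).contMDiffAt (htgt.mem_nhds hpe)).mdifferentiableAt (by simp : ((⊤ : ℕ∞) : WithTop ℕ∞) ≠ 0)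
    have hvdiff : MDifferentiableAt 𝓘(ℝ, ℝ) 𝓘(ℝ, F) (fun s => e p + ρ s • a₁) 0 :=
      hv₁.differentiableAt.mdifferentiableAt
    have hcomp := mfderiv_comp (I' := 𝓘(ℝ, F)) 0 (by simpa [hρ0] using hsymm) hvdiff
    show mfderiv 𝓘(ℝ, ℝ) 𝓘(ℝ, F) (fun s => e.symm (u (s, 0))) 0 (1 : ℝ) = w₁
    rw [hcurve]
    have hval : mfderiv 𝓘(ℝ, ℝ) 𝓘(ℝ, F) (fun s => e p + ρ s • a₁) 0 (1 : ℝ) = a₁ := by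
      rw [mfderiv_eq_fderiv]
      rw [hv₁.hasFDerivAt.fderiv]
      exact one_smul ℝ _
    rw [show (e p + ρ 0 • a₁ : F) = e p by rw [hρ0]; simp] at hcomp
    rw [hcomp]
    show mfderiv 𝓘(ℝ, F) 𝓘(ℝ, F) e.symm (e p)
      ((mfderiv 𝓘(ℝ, ℝ) 𝓘(ℝ, F) (fun s => e p + ρ s • a₁) 0) (1 : ℝ)) = w₁
    rw [hval]
    have hid := mfderivWithin_extChartAt_symm_comp_mfderiv_extChartAt (I := 𝓘(ℝ, F)) (x := p) hpe
    rw [ModelWithCorners.range_eq_univ, mfderivWithin_univ,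
      (extChartAt 𝓘(ℝ, F) p).left_inv hps] at hid
    exact congrArg (fun L => L w₁) hid
  · -- second partial derivative
    have hcurve : (fun t => e.symm (u (0, t))) = e.symm ∘ (fun t => e p + ρ t • a₂) := by
      funext t
      show e.symm (e p + ρ 0 • a₁ + ρ t • a₂) = _
      rw [hρ0]; simp
    have hv₂ : HasDerivAt (fun t => e p + ρ t • a₂) a₂ 0 := by
      simpa using (hρderiv.smul_const a₂).const_add (e p)
    have hsymm : MDifferentiableAt 𝓘(ℝ, F) 𝓘(ℝ, F) e.symm (e p) :=
      ((contMDiffOn_extChartAt_symm p).contMDiffAt (htgt.mem_nhds hpe)).mdifferentiableAt (by simp : ((⊤ : ℕ∞) : WithTop ℕ∞) ≠ 0)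
    have hvdiff : MDifferentiableAt 𝓘(ℝ, ℝ) 𝓘(ℝ, F) (fun t => e p + ρ t • a₂) 0 :=
      hv₂.differentiableAt.mdifferentiableAt
    have hcomp := mfderiv_comp (I' := 𝓘(ℝ, F)) 0 (by simpa [hρ0] using hsymm) hvdiff
    show mfderiv 𝓘(ℝ, ℝ) 𝓘(ℝ, F) (fun t => e.symm (u (0, t))) 0 (1 : ℝ) = w₂
    rw [hcurve]
    have hval : mfderiv 𝓘(ℝ, ℝ) 𝓘(ℝ, F) (fun t => e p + ρ t • a₂) 0 (1 : ℝ) = a₂ := by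
      rw [mfderiv_eq_fderiv]
      rw [hv₂.hasFDerivAt.fderiv]
      exact one_smul ℝ _
    rw [show (e p + ρ 0 • a₂ : F) = e p by rw [hρ0]; simp] at hcomp
    rw [hcomp]
    show mfderiv 𝓘(ℝ, F) 𝓘(ℝ, F) e.symm (e p)
      ((mfderiv 𝓘(ℝ, ℝ) 𝓘(ℝ, F) (fun t => e p + ρ t • a₂) 0) (1 : ℝ)) = w₂
    rw [hval]
    have hid := mfderivWithin_extChartAt_symm_comp_mfderiv_extChartAt (I := 𝓘(ℝ, F)) (x := p) hpe
    rw [ModelWithCorners.range_eq_univ, mfderivWithin_univ,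
      (extChartAt 𝓘(ℝ, F) p).left_inv hps] at hid
    exact congrArg (fun L => L w₂) hid


lemma bcwz_smooth_conj (k : G) :
    ContMDiff 𝓘(ℝ, 𝔤) 𝓘(ℝ, 𝔤) (⊤ : ℕ∞) (fun h : G => k * h * k⁻¹) :=
  (contMDiff_const.mul contMDiff_id).mul contMDiff_const

lemma bcwz_mdiff_conj (k : G) (h : G) :
    MDifferentiableAt 𝓘(ℝ, 𝔤) 𝓘(ℝ, 𝔤) (fun h : G => k * h * k⁻¹) h :=
  ((bcwz_smooth_conj k) h).mdifferentiableAt (by simp : ((⊤ : ℕ∞) : WithTop ℕ∞) ≠ 0)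

lemma bcwz_Adj_one (ξ : 𝔤) : Adj G (1 : G) ξ = ξ := by
  have : (fun h : G => (1:G) * h * (1:G)⁻¹) = id := by
    funext h; simp
  rw [Adj, this, mfderiv_id]
  rfl

lemma bcwz_leftTrans_one (ξ : 𝔤) : leftTrans G (1 : G) ξ = ξ := by
  have : (fun h : G => (1:G) * h) = id := by
    funext h; simp
  rw [leftTrans, this, mfderiv_id]
  rfl

lemma bcwz_Adj_mul (k l : G) (ξ : 𝔤) : Adj G (k * l) ξ = Adj G k (Adj G l ξ) := by
  have hcomp : (fun h : G => (k*l) * h * (k*l)⁻¹) =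
      (fun h : G => k * h * k⁻¹) ∘ (fun h : G => l * h * l⁻¹) := by
    funext h; simp [Function.comp, mul_assoc]
  have h1 : ((fun h : G => l * h * l⁻¹) 1) = 1 := by simp
  rw [Adj, hcomp, mfderiv_comp (1 : G)
    (by rw [show l*(1:G)*l⁻¹ = 1 by simp]; exact bcwz_mdiff_conj k 1) (bcwz_mdiff_conj l 1)]
  show mfderiv 𝓘(ℝ, 𝔤) 𝓘(ℝ, 𝔤) (fun h : G => k * h * k⁻¹) ((fun h : G => l * h * l⁻¹) 1)
      (mfderiv 𝓘(ℝ, 𝔤) 𝓘(ℝ, 𝔤) (fun h : G => l * h * l⁻¹) 1 ξ) = Adj G k (Adj G l ξ)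
  rw [h1]
  rfl

lemma bcwz_Adj_inv_cancel (k : G) (ξ : 𝔤) : Adj G k (Adj G k⁻¹ ξ) = ξ := by
  rw [← bcwz_Adj_mul, mul_inv_cancel, bcwz_Adj_one]

lemma bcwz_coordChange_eq {y y' z : G} (hy : y = 1) (hy' : y' = 1) (hz : z = 1) (w : 𝔤) :
    (tangentBundleCore 𝓘(ℝ, 𝔤) G).coordChange (achart 𝔤 y) (achart 𝔤 y') z w = w := by
  subst hy; subst hy'; subst hz
  exact tangentCoordChange_self (I := 𝓘(ℝ, 𝔤)) (mem_extChartAt_source 1)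

lemma bcwz_mdiff_adj (ξ : 𝔤) :
    MDifferentiableAt 𝓘(ℝ, 𝔤) 𝓘(ℝ, 𝔤) (fun h : G => Adj G h ξ) 1 := by
  have hf : ContMDiffAt ((𝓘(ℝ, 𝔤)).prod 𝓘(ℝ, 𝔤)) 𝓘(ℝ, 𝔤) (⊤ : ℕ∞)
      (Function.uncurry (fun h k : G => h * k * h⁻¹)) (1, 1) := by
    have : ContMDiff ((𝓘(ℝ, 𝔤)).prod 𝓘(ℝ, 𝔤)) 𝓘(ℝ, 𝔤) (⊤ : ℕ∞)
        (fun p : G × G => p.1 * p.2 * p.1⁻¹) :=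
      (contMDiff_fst.mul contMDiff_snd).mul contMDiff_fst.inv
    exact this (1, 1)
  have hg : ContMDiffAt 𝓘(ℝ, 𝔤) 𝓘(ℝ, 𝔤) 1 (fun _ : G => (1 : G)) 1 := contMDiffAt_const
  have H := ContMDiffAt.mfderiv (fun h k : G => h * k * h⁻¹) (fun _ : G => (1:G)) hf hg (by norm_cast)
  set Dfun : G → (𝔤 →L[ℝ] 𝔤) :=
    (fun h : G => mfderiv 𝓘(ℝ, 𝔤) 𝓘(ℝ, 𝔤) (fun k : G => h * k * h⁻¹) 1) with hDfun
  have heq : inTangentCoordinates 𝓘(ℝ, 𝔤) 𝓘(ℝ, 𝔤) (fun _ : G => (1:G))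
      (fun h : G => h * 1 * h⁻¹)
      Dfun 1 = Dfun := by
    funext h
    have h1 : h * 1 * h⁻¹ = 1 := by simp
    rw [inTangentCoordinates_eq]
    · ext v
      simp only [ContinuousLinearMap.coe_comp', Function.comp_apply]
      refine (bcwz_coordChange_eq (by simp) (by simp) (by simp) _).trans ?_
      exact congrArg _ (bcwz_coordChange_eq rfl rfl rfl v)
    · exact mem_chart_source _ _
    · rw [h1]
      have e2 : (1:G) * 1 * 1⁻¹ = 1 := by simp
      rw [e2]
      exact mem_chart_source _ _
  have H2 : ContMDiffAt 𝓘(ℝ, 𝔤) 𝓘(ℝ, 𝔤 →L[ℝ] 𝔤) 1 Dfun 1 := by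
    rw [← heq]
    exact H
  have H3 : ContMDiffAt 𝓘(ℝ, 𝔤) 𝓘(ℝ, 𝔤) 1 (fun h : G => Adj G h ξ) 1 := by
    have := H2.clm_apply (contMDiffAt_const (c := ξ))
    exact this
  exact H3.mdifferentiableAt one_ne_zero

/-- Derivative of a product curve. -/
lemma bcwz_mfderiv_pair {F₁ : Type*} [NormedAddCommGroup F₁] [NormedSpace ℝ F₁]
    {M₁ : Type*} [TopologicalSpace M₁] [ChartedSpace F₁ M₁]
    {F₂ : Type*} [NormedAddCommGroup F₂] [NormedSpace ℝ F₂]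
    {M₂ : Type*} [TopologicalSpace M₂] [ChartedSpace F₂ M₂]
    (α : ℝ → M₁) (β : ℝ → M₂) (t0 : ℝ)
    (hα : MDifferentiableAt 𝓘(ℝ, ℝ) 𝓘(ℝ, F₁) α t0)
    (hβ : MDifferentiableAt 𝓘(ℝ, ℝ) 𝓘(ℝ, F₂) β t0) :
    mfderiv 𝓘(ℝ, ℝ) ((𝓘(ℝ, F₁)).prod 𝓘(ℝ, F₂)) (fun s => (α s, β s)) t0 (1 : ℝ) =
      (mfderiv 𝓘(ℝ, ℝ) 𝓘(ℝ, F₁) α t0 (1 : ℝ), mfderiv 𝓘(ℝ, ℝ) 𝓘(ℝ, F₂) β t0 (1 : ℝ)) := by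
  rw [hα.mfderiv_prod hβ]
  rfl

/-- Derivative of a left-translated curve through the identity. -/
lemma bcwz_mul_curve (k : G) (γ : ℝ → G) (hγ : ContMDiff 𝓘(ℝ, ℝ) 𝓘(ℝ, 𝔤) (⊤ : ℕ∞) γ)
    (hγ0 : γ 0 = 1) :
    mfderiv 𝓘(ℝ, ℝ) 𝓘(ℝ, 𝔤) (fun t => k * γ t) 0 (1 : ℝ) =
      leftTrans (𝔤 := 𝔤) G k ((mfderiv 𝓘(ℝ, ℝ) 𝓘(ℝ, 𝔤) γ 0 (1 : ℝ) : 𝔤)) := by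
  have hcomp : (fun t => k * γ t) = (fun h : G => k * h) ∘ γ := rfl
  have hL : MDifferentiableAt 𝓘(ℝ, 𝔤) 𝓘(ℝ, 𝔤) (fun h : G => k * h) (γ 0) :=
    ((contMDiff_const.mul contMDiff_id) (γ 0)).mdifferentiableAt (by simp : ((⊤ : ℕ∞) : WithTop ℕ∞) ≠ 0)
  rw [hcomp, mfderiv_comp 0 hL (hγ.mdifferentiableAt (by simp : ((⊤ : ℕ∞) : WithTop ℕ∞) ≠ 0))]
  show mfderiv 𝓘(ℝ, 𝔤) 𝓘(ℝ, 𝔤) (fun h : G => k * h) (γ 0)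
    (mfderiv 𝓘(ℝ, ℝ) 𝓘(ℝ, 𝔤) γ 0 (1:ℝ)) = _
  rw [hγ0]
  rfl

end Aux

/- STATEMENT 7: For `f ∈ (𝔤* ⊗ C^∞(N))^G` and the 1-form `λ` on `N × G` defined by
`λ(v_x, L_{g*}ξ) = f(Ad_g ξ)(x)`, one has `Ψ(df) = dλ`.  The exterior derivative `dλ`
is the (unique) 2-form `DΛ` characterized on pairs of coordinate directions of any
smooth surface `σ : ℝ² → N × G` by
`DΛ(∂₁σ, ∂₂σ) = ∂₁(λ(∂₂σ)) − ∂₂(λ(∂₁σ))`, and the Lie bracket `[ξ₁,ξ₂]` is the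
derivative at `1` of `h ↦ Ad_h ξ₂` in the direction `ξ₁`. -/
theorem bcwz_of_df_eq_ext_deriv_lambda
    (a : N → G → N)
    (ha_one : ∀ x, a x 1 = x)
    (ha_mul : ∀ x g h, a (a x g) h = a x (g * h))
    (ha_smooth : ContMDiff ((𝓘(ℝ, E)).prod 𝓘(ℝ, 𝔤)) 𝓘(ℝ, E) (⊤ : ℕ∞)
      (fun p : N × G => a p.1 p.2))
    (f : 𝔤 →ₗ[ℝ] (N → ℝ))
    (hf_equiv : ∀ (g : G) (ξ : 𝔤) (x : N), f (Adj G g ξ) x = f ξ (a x g))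
    (hf_smooth : ∀ ξ, ContMDiff 𝓘(ℝ, E) 𝓘(ℝ, ℝ) (⊤ : ℕ∞) (f ξ))
    -- the Lie bracket on `𝔤`
    (br : 𝔤 → 𝔤 → 𝔤)
    (hbr : ∀ ξ₁ ξ₂, br ξ₁ ξ₂ =
      mfderiv 𝓘(ℝ, 𝔤) 𝓘(ℝ, 𝔤) (fun h : G => Adj G h ξ₂) 1 ξ₁)
    -- the 1-form `λ` on `N × G`
    (Λ : N × G → ((E × 𝔤) →L[ℝ] ℝ))
    (hΛ : ∀ (x : N) (g : G) (v : E) (ξ : 𝔤),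
      Λ (x, g) (v, leftTrans G g ξ) = f (Adj G g ξ) x)
    -- `DΛ` is the exterior derivative `dλ`
    (DΛ : N × G → ((E × 𝔤) [⋀^Fin 2]→ₗ[ℝ] ℝ))
    (hDΛ : ∀ σ : ℝ × ℝ → N × G,
      ContMDiff ((𝓘(ℝ, ℝ)).prod 𝓘(ℝ, ℝ)) ((𝓘(ℝ, E)).prod 𝓘(ℝ, 𝔤)) (⊤ : ℕ∞) σ →
      DΛ (σ (0, 0)) ![surfD₁ σ (0, 0), surfD₂ σ (0, 0)] =
        deriv (fun s => Λ (σ (s, 0)) (surfD₂ σ (s, 0))) 0 -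
          deriv (fun t => Λ (σ (0, t)) (surfD₁ σ (0, t))) 0) :
    -- conclusion : `Ψ(df) = dλ`
    ∀ (x : N) (g : G) (v₁ v₂ : E) (ξ₁ ξ₂ : 𝔤),
      DΛ (x, g) ![(v₁, leftTrans G g ξ₁), (v₂, leftTrans G g ξ₂)] =
        dfun (f ξ₂) (a x g) (actDeriv a g x v₁) -
          dfun (f ξ₁) (a x g) (actDeriv a g x v₂) +
          f (Adj G g (br ξ₁ ξ₂)) x := by
  intro x g v₁ v₂ ξ₁ ξ₂
  obtain ⟨cN, hcN, hcN0, hcN1, hcN2⟩ := bcwz_exists_good_surface x v₁ v₂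
  obtain ⟨cG, hcG, hcG0, hcG1, hcG2⟩ := bcwz_exists_good_surface (1 : G) ξ₁ ξ₂
  set γ₁ : ℝ → G := fun s => cG (s, 0) with hγ₁def
  set γ₂ : ℝ → G := fun t => cG (0, t) with hγ₂def
  have hγ₁ : ContMDiff 𝓘(ℝ, ℝ) 𝓘(ℝ, 𝔤) (⊤ : ℕ∞) γ₁ :=
    hcG.comp (contMDiff_id.prodMk contMDiff_const)
  have hγ₂ : ContMDiff 𝓘(ℝ, ℝ) 𝓘(ℝ, 𝔤) (⊤ : ℕ∞) γ₂ :=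
    hcG.comp (contMDiff_const.prodMk contMDiff_id)
  have hγ₁0 : γ₁ 0 = 1 := hcG0
  have hγ₂0 : γ₂ 0 = 1 := hcG0
  have hγ₁' : mfderiv 𝓘(ℝ, ℝ) 𝓘(ℝ, 𝔤) γ₁ 0 (1:ℝ) = ξ₁ := hcG1
  have hγ₂' : mfderiv 𝓘(ℝ, ℝ) 𝓘(ℝ, 𝔤) γ₂ 0 (1:ℝ) = ξ₂ := hcG2
  set σ : ℝ × ℝ → N × G := fun q => (cN q, g * γ₁ q.1 * γ₂ q.2) with hσdef
  have hσ : ContMDiff ((𝓘(ℝ, ℝ)).prod 𝓘(ℝ, ℝ)) ((𝓘(ℝ, E)).prod 𝓘(ℝ, 𝔤)) (⊤ : ℕ∞) σ := by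
    apply hcN.prodMk
    exact (contMDiff_const.mul (hγ₁.comp contMDiff_fst)).mul (hγ₂.comp contMDiff_snd)
  have key := hDΛ σ hσ
  -- abbreviations for models
  -- differentiability of basic curves
  have hcN1d : MDifferentiableAt 𝓘(ℝ, ℝ) 𝓘(ℝ, E) (fun s => cN (s, 0)) 0 :=
    (hcN.comp (contMDiff_id.prodMk contMDiff_const)).mdifferentiableAt (by simp : ((⊤ : ℕ∞) : WithTop ℕ∞) ≠ 0)
  have hcN2d : MDifferentiableAt 𝓘(ℝ, ℝ) 𝓘(ℝ, E) (fun t => cN (0, t)) 0 :=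
    (hcN.comp (contMDiff_const.prodMk contMDiff_id)).mdifferentiableAt (by simp : ((⊤ : ℕ∞) : WithTop ℕ∞) ≠ 0)
  -- the values of the surface and its partial derivatives at the origin
  have hσ00 : σ (0, 0) = (x, g) := by
    show (cN (0,0), g * γ₁ 0 * γ₂ 0) = (x, g)
    rw [hcN0, hγ₁0, hγ₂0, mul_one, mul_one]
  have hS1 : surfD₁ σ (0, 0) = ((v₁, leftTrans G g ξ₁) : E × 𝔤) := by
    show mfderiv 𝓘(ℝ, ℝ) ((𝓘(ℝ, E)).prod 𝓘(ℝ, 𝔤)) (fun s => σ (s, 0)) 0 (1 : ℝ) = _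
    have hfun : (fun s : ℝ => σ (s, 0)) = (fun s => (cN (s, 0), g * γ₁ s)) := by
      funext s
      show (cN (s, 0), g * γ₁ s * γ₂ 0) = _
      rw [hγ₂0, mul_one]
    rw [hfun]
    calc (id (mfderiv 𝓘(ℝ, ℝ) ((𝓘(ℝ, E)).prod 𝓘(ℝ, 𝔤)) (fun s => (cN (s, 0), g * γ₁ s)) 0 (1 : ℝ)) : E × 𝔤)
        = ((mfderiv 𝓘(ℝ, ℝ) 𝓘(ℝ, E) (fun s => cN (s, 0)) 0 (1:ℝ),
           mfderiv 𝓘(ℝ, ℝ) 𝓘(ℝ, 𝔤) (fun s => g * γ₁ s) 0 (1:ℝ)) : E × 𝔤) :=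
          bcwz_mfderiv_pair _ _ 0 hcN1d ((contMDiff_const.mul hγ₁).mdifferentiableAt (by simp : ((⊤ : ℕ∞) : WithTop ℕ∞) ≠ 0))
      _ = (v₁, leftTrans G g ξ₁) := by
          rw [hcN1, bcwz_mul_curve g γ₁ hγ₁ hγ₁0, hγ₁']
  have hS2 : surfD₂ σ (0, 0) = ((v₂, leftTrans G g ξ₂) : E × 𝔤) := by
    show mfderiv 𝓘(ℝ, ℝ) ((𝓘(ℝ, E)).prod 𝓘(ℝ, 𝔤)) (fun t => σ (0, t)) 0 (1 : ℝ) = _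
    have hfun : (fun t : ℝ => σ (0, t)) = (fun t => (cN (0, t), g * γ₂ t)) := by
      funext t
      show (cN (0, t), g * γ₁ 0 * γ₂ t) = _
      rw [hγ₁0, mul_one]
    rw [hfun]
    calc (id (mfderiv 𝓘(ℝ, ℝ) ((𝓘(ℝ, E)).prod 𝓘(ℝ, 𝔤)) (fun t => (cN (0, t), g * γ₂ t)) 0 (1 : ℝ)) : E × 𝔤)
        = ((mfderiv 𝓘(ℝ, ℝ) 𝓘(ℝ, E) (fun t => cN (0, t)) 0 (1:ℝ),
           mfderiv 𝓘(ℝ, ℝ) 𝓘(ℝ, 𝔤) (fun t => g * γ₂ t) 0 (1:ℝ)) : E × 𝔤) :=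
          bcwz_mfderiv_pair _ _ 0 hcN2d ((contMDiff_const.mul hγ₂).mdifferentiableAt (by simp : ((⊤ : ℕ∞) : WithTop ℕ∞) ≠ 0))
      _ = (v₂, leftTrans G g ξ₂) := by
          rw [hcN2, bcwz_mul_curve g γ₂ hγ₂ hγ₂0, hγ₂']
  -- identification of the first integrand
  have termA : ∀ s : ℝ, Λ (σ (s, 0)) (surfD₂ σ (s, 0)) = f ξ₂ (a (cN (s, 0)) (g * γ₁ s)) := by
    intro s
    have hpt : σ (s, 0) = (cN (s, 0), g * γ₁ s) := by
      show (cN (s, 0), g * γ₁ s * γ₂ 0) = _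
      rw [hγ₂0, mul_one]
    have hvec : surfD₂ σ (s, 0) =
        (((mfderiv 𝓘(ℝ, ℝ) 𝓘(ℝ, E) (fun t => cN (s, t)) 0 (1:ℝ)),
          leftTrans G (g * γ₁ s) ξ₂) : E × 𝔤) := by
      show mfderiv 𝓘(ℝ, ℝ) ((𝓘(ℝ, E)).prod 𝓘(ℝ, 𝔤))
        (fun t => (cN (s, t), (g * γ₁ s) * γ₂ t)) 0 (1 : ℝ) = _
      calc (id (mfderiv 𝓘(ℝ, ℝ) ((𝓘(ℝ, E)).prod 𝓘(ℝ, 𝔤))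
            (fun t => (cN (s, t), (g * γ₁ s) * γ₂ t)) 0 (1 : ℝ)) : E × 𝔤)
          = ((mfderiv 𝓘(ℝ, ℝ) 𝓘(ℝ, E) (fun t => cN (s, t)) 0 (1:ℝ),
             mfderiv 𝓘(ℝ, ℝ) 𝓘(ℝ, 𝔤) (fun t => (g * γ₁ s) * γ₂ t) 0 (1:ℝ)) : E × 𝔤) :=
            bcwz_mfderiv_pair _ _ 0
              ((hcN.comp (contMDiff_const.prodMk contMDiff_id)).mdifferentiableAt (by simp : ((⊤ : ℕ∞) : WithTop ℕ∞) ≠ 0))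
              ((contMDiff_const.mul hγ₂).mdifferentiableAt (by simp : ((⊤ : ℕ∞) : WithTop ℕ∞) ≠ 0))
        _ = _ := by rw [bcwz_mul_curve (g * γ₁ s) γ₂ hγ₂ hγ₂0, hγ₂']
    rw [hpt, hvec]; exact (hΛ _ _ _ _).trans (hf_equiv _ _ _)
  -- identification of the second integrand
  have termB : ∀ t : ℝ, Λ (σ (0, t)) (surfD₁ σ (0, t)) = f ξ₁ (a (cN (0, t)) g) := by
    intro t
    have hpt : σ (0, t) = (cN (0, t), g * γ₂ t) := by
      show (cN (0, t), g * γ₁ 0 * γ₂ t) = _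
      rw [hγ₁0, mul_one]
    have hgrp : mfderiv 𝓘(ℝ, ℝ) 𝓘(ℝ, 𝔤) (fun s => g * γ₁ s * γ₂ t) 0 (1:ℝ) =
        leftTrans G (g * γ₂ t) (Adj G (γ₂ t)⁻¹ ξ₁) := by
      have hfun : (fun s => g * γ₁ s * γ₂ t) =
          (fun h : G => (g * γ₂ t) * h) ∘
            ((fun h : G => (γ₂ t)⁻¹ * h * ((γ₂ t)⁻¹)⁻¹) ∘ γ₁) := by
        funext s
        simp only [Function.comp_apply, inv_inv]
        group
      have hγ₁d : MDifferentiableAt 𝓘(ℝ, ℝ) 𝓘(ℝ, 𝔤) γ₁ 0 := hγ₁.mdifferentiableAt (by simp : ((⊤ : ℕ∞) : WithTop ℕ∞) ≠ 0)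
      have hIC : MDifferentiableAt 𝓘(ℝ, ℝ) 𝓘(ℝ, 𝔤)
          ((fun h : G => (γ₂ t)⁻¹ * h * ((γ₂ t)⁻¹)⁻¹) ∘ γ₁) 0 :=
        (bcwz_mdiff_conj _ _).comp 0 hγ₁d
      have houter : MDifferentiableAt 𝓘(ℝ, 𝔤) 𝓘(ℝ, 𝔤) (fun h : G => (g * γ₂ t) * h)
          (((fun h : G => (γ₂ t)⁻¹ * h * ((γ₂ t)⁻¹)⁻¹) ∘ γ₁) 0) :=
        ((contMDiff_const.mul contMDiff_id) _).mdifferentiableAt (by simp : ((⊤ : ℕ∞) : WithTop ℕ∞) ≠ 0)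
      rw [hfun, mfderiv_comp 0 houter hIC]
      show mfderiv 𝓘(ℝ, 𝔤) 𝓘(ℝ, 𝔤) (fun h : G => (g * γ₂ t) * h)
          (((fun h : G => (γ₂ t)⁻¹ * h * ((γ₂ t)⁻¹)⁻¹) ∘ γ₁) 0)
          (mfderiv 𝓘(ℝ, ℝ) 𝓘(ℝ, 𝔤)
            ((fun h : G => (γ₂ t)⁻¹ * h * ((γ₂ t)⁻¹)⁻¹) ∘ γ₁) 0 (1:ℝ)) = _
      have h2 : mfderiv 𝓘(ℝ, ℝ) 𝓘(ℝ, 𝔤)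
          ((fun h : G => (γ₂ t)⁻¹ * h * ((γ₂ t)⁻¹)⁻¹) ∘ γ₁) 0 (1:ℝ) = Adj G (γ₂ t)⁻¹ ξ₁ := by
        rw [mfderiv_comp 0 (bcwz_mdiff_conj _ _) hγ₁d]
        show mfderiv 𝓘(ℝ, 𝔤) 𝓘(ℝ, 𝔤) (fun h : G => (γ₂ t)⁻¹ * h * ((γ₂ t)⁻¹)⁻¹) (γ₁ 0)
          (mfderiv 𝓘(ℝ, ℝ) 𝓘(ℝ, 𝔤) γ₁ 0 (1:ℝ)) = _
        rw [hγ₁', hγ₁0]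
        rfl
      have h3 : ((fun h : G => (γ₂ t)⁻¹ * h * ((γ₂ t)⁻¹)⁻¹) ∘ γ₁) 0 = 1 := by
        show (γ₂ t)⁻¹ * γ₁ 0 * ((γ₂ t)⁻¹)⁻¹ = 1
        rw [hγ₁0]
        simp
      rw [h2, h3]
      rfl
    have hvec : surfD₁ σ (0, t) =
        (((mfderiv 𝓘(ℝ, ℝ) 𝓘(ℝ, E) (fun s => cN (s, t)) 0 (1:ℝ)),
          leftTrans G (g * γ₂ t) (Adj G (γ₂ t)⁻¹ ξ₁)) : E × 𝔤) := by
      show mfderiv 𝓘(ℝ, ℝ) ((𝓘(ℝ, E)).prod 𝓘(ℝ, 𝔤))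
        (fun s => (cN (s, t), g * γ₁ s * γ₂ t)) 0 (1 : ℝ) = _
      calc (id (mfderiv 𝓘(ℝ, ℝ) ((𝓘(ℝ, E)).prod 𝓘(ℝ, 𝔤))
            (fun s => (cN (s, t), g * γ₁ s * γ₂ t)) 0 (1 : ℝ)) : E × 𝔤)
          = ((mfderiv 𝓘(ℝ, ℝ) 𝓘(ℝ, E) (fun s => cN (s, t)) 0 (1:ℝ),
             mfderiv 𝓘(ℝ, ℝ) 𝓘(ℝ, 𝔤) (fun s => g * γ₁ s * γ₂ t) 0 (1:ℝ)) : E × 𝔤) :=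
            bcwz_mfderiv_pair _ _ 0
              ((hcN.comp (contMDiff_id.prodMk contMDiff_const)).mdifferentiableAt (by simp : ((⊤ : ℕ∞) : WithTop ℕ∞) ≠ 0))
              (((contMDiff_const.mul hγ₁).mul contMDiff_const).mdifferentiableAt (by simp : ((⊤ : ℕ∞) : WithTop ℕ∞) ≠ 0))
        _ = _ := by rw [hgrp]
    rw [hpt, hvec]; exact (hΛ _ _ _ _).trans (by rw [bcwz_Adj_mul g (γ₂ t), bcwz_Adj_inv_cancel, hf_equiv])
  have e1 : (fun s => Λ (σ (s, 0)) (surfD₂ σ (s, 0))) =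
      fun s => f ξ₂ (a (cN (s, 0)) (g * γ₁ s)) := funext termA
  have e2 : (fun t => Λ (σ (0, t)) (surfD₁ σ (0, t))) =
      fun t => f ξ₁ (a (cN (0, t)) g) := funext termB
  rw [e1, e2, hσ00, hS1, hS2] at key
  -- compute the two derivatives
  have hder2 : deriv (fun t => f ξ₁ (a (cN (0, t)) g)) 0 =
      dfun (f ξ₁) (a x g) (actDeriv a g x v₂) := by
    have hcomp : (fun t => f ξ₁ (a (cN (0, t)) g)) =
        (f ξ₁) ∘ ((fun z : N => a z g) ∘ (fun t => cN (0, t))) := rfl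
    have hag : MDifferentiableAt 𝓘(ℝ, E) 𝓘(ℝ, E) (fun z : N => a z g)
        ((fun t : ℝ => cN (0, t)) 0) :=
      ((ha_smooth.comp (contMDiff_id.prodMk contMDiff_const)) _).mdifferentiableAt (by simp : ((⊤ : ℕ∞) : WithTop ℕ∞) ≠ 0)
    have hinner : MDifferentiableAt 𝓘(ℝ, ℝ) 𝓘(ℝ, E)
        ((fun z : N => a z g) ∘ (fun t => cN (0, t))) 0 :=
      MDifferentiableAt.comp (f := fun t : ℝ => cN (0, t)) 0 hag hcN2d
    have hfd : MDifferentiableAt 𝓘(ℝ, E) 𝓘(ℝ, ℝ) (f ξ₁)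
        (((fun z : N => a z g) ∘ (fun t => cN (0, t))) 0) :=
      ((hf_smooth ξ₁) _).mdifferentiableAt (by simp : ((⊤ : ℕ∞) : WithTop ℕ∞) ≠ 0)
    have h0 : deriv ((f ξ₁) ∘ ((fun z : N => a z g) ∘ (fun t => cN (0, t)))) 0 =
        mfderiv 𝓘(ℝ, ℝ) 𝓘(ℝ, ℝ)
          ((f ξ₁) ∘ ((fun z : N => a z g) ∘ (fun t => cN (0, t)))) 0 (1:ℝ) := by
      rw [mfderiv_eq_fderiv]
      exact fderiv_apply_one_eq_deriv.symm
    rw [hcomp, h0, mfderiv_comp 0 hfd hinner]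
    show mfderiv 𝓘(ℝ, E) 𝓘(ℝ, ℝ) (f ξ₁) (((fun z : N => a z g) ∘ (fun t => cN (0, t))) 0)
      (mfderiv 𝓘(ℝ, ℝ) 𝓘(ℝ, E) ((fun z : N => a z g) ∘ (fun t => cN (0, t))) 0 (1:ℝ)) = _
    have hin : mfderiv 𝓘(ℝ, ℝ) 𝓘(ℝ, E) ((fun z : N => a z g) ∘ (fun t => cN (0, t))) 0 (1:ℝ) =
        actDeriv a g x v₂ := by
      rw [mfderiv_comp (f := fun t : ℝ => cN (0, t)) 0 hag hcN2d]
      show mfderiv 𝓘(ℝ, E) 𝓘(ℝ, E) (fun z : N => a z g) ((fun t : ℝ => cN (0, t)) 0)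
        (mfderiv 𝓘(ℝ, ℝ) 𝓘(ℝ, E) (fun t => cN (0, t)) 0 (1:ℝ)) = _
      rw [hcN2, show ((fun t : ℝ => cN (0, t)) 0) = x from hcN0]
      rfl
    have hpt2 : ((fun z : N => a z g) ∘ (fun t => cN (0, t))) 0 = a x g := by
      show a (cN (0,0)) g = a x g
      rw [hcN0]
    rw [hin, hpt2]
    rfl
  have hder1 : deriv (fun s => f ξ₂ (a (cN (s, 0)) (g * γ₁ s))) 0 =
      dfun (f ξ₂) (a x g) (actDeriv a g x v₁) + f (Adj G g (br ξ₁ ξ₂)) x := by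
    set Hfun : N × G → ℝ := fun p => f ξ₂ (a p.1 (g * p.2)) with hHdef
    have hHs : ContMDiff ((𝓘(ℝ, E)).prod 𝓘(ℝ, 𝔤)) 𝓘(ℝ, ℝ) (⊤ : ℕ∞) Hfun :=
      (hf_smooth ξ₂).comp (ha_smooth.comp
        (contMDiff_fst.prodMk (contMDiff_const.mul contMDiff_snd)))
    set φ : ℝ → N × G := fun s => (cN (s, 0), γ₁ s) with hφdef
    have hφs : ContMDiff 𝓘(ℝ, ℝ) ((𝓘(ℝ, E)).prod 𝓘(ℝ, 𝔤)) (⊤ : ℕ∞) φ :=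
      (hcN.comp (contMDiff_id.prodMk contMDiff_const)).prodMk hγ₁
    have hφ0 : φ 0 = ((x, 1) : N × G) := by
      show (cN (0,0), γ₁ 0) = _
      rw [hcN0, hγ₁0]
    have hφ' : mfderiv 𝓘(ℝ, ℝ) ((𝓘(ℝ, E)).prod 𝓘(ℝ, 𝔤)) φ 0 (1:ℝ) = ((v₁, ξ₁) : E × 𝔤) := by
      calc (id (mfderiv 𝓘(ℝ, ℝ) ((𝓘(ℝ, E)).prod 𝓘(ℝ, 𝔤)) φ 0 (1:ℝ)) : E × 𝔤)
          = ((mfderiv 𝓘(ℝ, ℝ) 𝓘(ℝ, E) (fun s => cN (s, 0)) 0 (1:ℝ),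
             mfderiv 𝓘(ℝ, ℝ) 𝓘(ℝ, 𝔤) γ₁ 0 (1:ℝ)) : E × 𝔤) :=
            bcwz_mfderiv_pair _ _ 0 hcN1d (hγ₁.mdifferentiableAt (by simp : ((⊤ : ℕ∞) : WithTop ℕ∞) ≠ 0))
        _ = (v₁, ξ₁) := by rw [hcN1, hγ₁']
    have hcomp : (fun s => f ξ₂ (a (cN (s, 0)) (g * γ₁ s))) = Hfun ∘ φ := rfl
    have h0 : deriv (Hfun ∘ φ) 0 =
        mfderiv 𝓘(ℝ, ℝ) 𝓘(ℝ, ℝ) (Hfun ∘ φ) 0 (1:ℝ) := by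
      rw [mfderiv_eq_fderiv]
      exact fderiv_apply_one_eq_deriv.symm
    rw [hcomp, h0, mfderiv_comp 0 ((hHs (φ 0)).mdifferentiableAt (by simp : ((⊤ : ℕ∞) : WithTop ℕ∞) ≠ 0))
      (hφs.mdifferentiableAt (by simp : ((⊤ : ℕ∞) : WithTop ℕ∞) ≠ 0))]
    show mfderiv ((𝓘(ℝ, E)).prod 𝓘(ℝ, 𝔤)) 𝓘(ℝ, ℝ) Hfun (φ 0)
      (mfderiv 𝓘(ℝ, ℝ) ((𝓘(ℝ, E)).prod 𝓘(ℝ, 𝔤)) φ 0 (1:ℝ)) = _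
    rw [hφ', hφ0]
    -- split into partial derivatives
    have hHd : MDifferentiableAt ((𝓘(ℝ, E)).prod 𝓘(ℝ, 𝔤)) 𝓘(ℝ, ℝ) Hfun ((x, 1) : N × G) :=
      (hHs _).mdifferentiableAt (by simp : ((⊤ : ℕ∞) : WithTop ℕ∞) ≠ 0)
    refine (mfderiv_prod_eq_add_apply (I := 𝓘(ℝ, E)) (I' := 𝓘(ℝ, 𝔤)) (I'' := 𝓘(ℝ, ℝ)) (v := ((v₁, ξ₁) : E × 𝔤)) hHd).trans ?_
    -- the `N`-part
    have hN : mfderiv 𝓘(ℝ, E) 𝓘(ℝ, ℝ)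
        (fun z : N => Hfun (z, ((x, (1:G))).2)) x (((v₁, ξ₁) : E × 𝔤)).1 =
        dfun (f ξ₂) (a x g) (actDeriv a g x v₁) := by
      have hfun1 : (fun z : N => Hfun (z, ((x, (1:G))).2)) =
          (f ξ₂) ∘ (fun z : N => a z g) := by
        funext z
        show f ξ₂ (a z (g * 1)) = f ξ₂ (a z g)
        rw [mul_one]
      have hagx : MDifferentiableAt 𝓘(ℝ, E) 𝓘(ℝ, E) (fun z : N => a z g)
          (x : N) :=
        ((ha_smooth.comp (contMDiff_id.prodMk contMDiff_const)) x).mdifferentiableAt (by simp : ((⊤ : ℕ∞) : WithTop ℕ∞) ≠ 0)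
      have hfd2 : MDifferentiableAt 𝓘(ℝ, E) 𝓘(ℝ, ℝ) (f ξ₂) ((fun z : N => a z g) x) :=
        ((hf_smooth ξ₂) _).mdifferentiableAt (by simp : ((⊤ : ℕ∞) : WithTop ℕ∞) ≠ 0)
      rw [hfun1, mfderiv_comp (f := fun z : N => a z g) x hfd2 hagx]
      rfl
    -- the `G`-part : the bracket term
    have hG : mfderiv 𝓘(ℝ, 𝔤) 𝓘(ℝ, ℝ)
        (fun z : G => Hfun (((x, (1:G))).1, z)) 1 (((v₁, ξ₁) : E × 𝔤)).2 =
        f (Adj G g (br ξ₁ ξ₂)) x := by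
      have hfun2 : (fun z : G => Hfun (((x, (1:G))).1, z)) =
          fun z : G => f ξ₂ (a (a x g) z) := by
        funext z
        show f ξ₂ (a x (g * z)) = f ξ₂ (a (a x g) z)
        rw [ha_mul]
      rw [hfun2]
      -- the continuous linear functional `ζ ↦ f ζ (a x g)`
      set L : (E × 𝔤) →L[ℝ] ℝ := Λ ((a x g), (1:G)) with hLdef
      set L' : 𝔤 →L[ℝ] ℝ := L.comp (ContinuousLinearMap.inr ℝ E 𝔤) with hL'def
      have hL : ∀ ζ : 𝔤, L' ζ = f ζ (a x g) := by
        intro ζ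
        have h1 : Λ ((a x g), (1:G)) ((0 : E), leftTrans G 1 ζ) = f (Adj G 1 ζ) (a x g) :=
          hΛ (a x g) 1 0 ζ
        rw [bcwz_leftTrans_one, bcwz_Adj_one] at h1
        exact h1
      have hDfe : (fun z : G => f ξ₂ (a (a x g) z)) =
          L' ∘ (fun h : G => Adj G h ξ₂) := by
        funext h
        show f ξ₂ (a (a x g) h) = L' (Adj G h ξ₂)
        rw [hL, hf_equiv]
      have hL'd : MDifferentiableAt 𝓘(ℝ, 𝔤) 𝓘(ℝ, ℝ) L' ((fun h : G => Adj G h ξ₂) 1) :=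
        (L'.contMDiff ((fun h : G => Adj G h ξ₂) 1)).mdifferentiableAt (by simp : ((⊤ : ℕ∞) : WithTop ℕ∞) ≠ 0)
      rw [hDfe, mfderiv_comp (f := fun h : G => Adj G h ξ₂) (1 : G) hL'd (bcwz_mdiff_adj ξ₂)]
      show mfderiv 𝓘(ℝ, 𝔤) 𝓘(ℝ, ℝ) L' ((fun h : G => Adj G h ξ₂) 1)
        (mfderiv 𝓘(ℝ, 𝔤) 𝓘(ℝ, 𝔤) (fun h : G => Adj G h ξ₂) 1 ξ₁) = _
      rw [← hbr]
      rw [mfderiv_eq_fderiv]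
      rw [L'.fderiv]
      exact (hL _).trans (hf_equiv g (br ξ₁ ξ₂) x).symm
    rw [hN, hG]; rfl
  rw [hder1, hder2] at key
  rw [key]
  ring

end BCWZ
end

section
/- Let G act on the right on N, let B ∈ Ω^2(N)^G be a G-invariant 2-form, and define Q ∈ (𝔤* ⊗ Ω^1(N))^G by Q(ξ) = ι_{ξ̂} B. Then the 2-form Ψ(Q) on the transformation groupoid N ⋊ G equals −(t* B − s* B), where s(x,g) = x and t(x,g) = x·g. -/
open Manifold

section BCWZ

variable {𝔤 : Type*} [NormedAddCommGroup 𝔤] [NormedSpace ℝ 𝔤]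
  {G : Type*} [TopologicalSpace G] [ChartedSpace 𝔤 G] [Group G]
  [IsTopologicalGroup G] [LieGroup 𝓘(ℝ, 𝔤) (⊤ : ℕ∞) G]
  {E : Type*} [NormedAddCommGroup E] [NormedSpace ℝ E]
  {N : Type*} [TopologicalSpace N] [ChartedSpace E N]
  [IsManifold 𝓘(ℝ, E) (⊤ : ℕ∞) N]

/-- The fundamental vector field `ξ̂|_x = d/dt|₀ (x ⋆ e^{tξ})` of a right action. -/
noncomputable def fundVF (a : N → G → N) (ξ : 𝔤) (x : N) : E :=
  mfderiv 𝓘(ℝ, 𝔤) 𝓘(ℝ, E) (a x) 1 ξ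

/- STATEMENT 8: Let `B ∈ Ω²(N)^G` and `Q(ξ) = ι_{ξ̂}B`.  Then the BCWZ 2-form `Ψ(Q)` on
the transformation groupoid `N ⋊ G` equals `−(t*B − s*B)`, where `s(x,g) = x`,
`t(x,g) = x·g`, and on tangent vectors `s_*(v, L_{g*}ξ) = v`,
`t_*(v, L_{g*}ξ) = v·g + ξ̂|_{x·g}`.  Both sides are evaluated at `(x,g)` on the pair of
tangent vectors `(v₁, L_{g*}ξ₁), (v₂, L_{g*}ξ₂)`. -/

lemma alt2_add_left (f : E [⋀^Fin 2]→ₗ[ℝ] ℝ) (u u' v : E) :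
    f ![u + u', v] = f ![u, v] + f ![u', v] := by
  have h := f.toMultilinearMap.map_update_add ![u, v] 0 u u'
  have e : ∀ w : E, Function.update (![u, v] : Fin 2 → E) 0 w = ![w, v] := by
    intro w; ext i; fin_cases i <;> simp
  simpa [e] using h

lemma alt2_add_right (f : E [⋀^Fin 2]→ₗ[ℝ] ℝ) (u v v' : E) :
    f ![u, v + v'] = f ![u, v] + f ![u, v'] := by
  have h := f.toMultilinearMap.map_update_add ![u, v] 1 v v'
  have e : ∀ w : E, Function.update (![u, v] : Fin 2 → E) 1 w = ![u, w] := by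
    intro w; ext i; fin_cases i <;> simp
  simpa [e] using h

lemma alt2_swap (f : E [⋀^Fin 2]→ₗ[ℝ] ℝ) (u v : E) :
    f ![u, v] = - f ![v, u] := by
  have h := f.map_add_swap ![u, v] (i := 0) (j := 1) (by decide)
  have e1 : (![u, v] : Fin 2 → E) ∘ ⇑(Equiv.swap (0 : Fin 2) 1) = ![v, u] := by
    ext i; fin_cases i <;> simp
  rw [e1] at h
  linarith [h]

theorem bcwz_of_contraction_eq_neg_coboundary
    (a : N → G → N)
    (ha_one : ∀ x, a x 1 = x)
    (ha_mul : ∀ x g h, a (a x g) h = a x (g * h))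
    (ha_smooth : ContMDiff ((𝓘(ℝ, E)).prod 𝓘(ℝ, 𝔤)) 𝓘(ℝ, E) (⊤ : ℕ∞)
      (fun p : N × G => a p.1 p.2))
    (B : N → (E [⋀^Fin 2]→ₗ[ℝ] ℝ))
    -- `B` is `G`-invariant
    (hBinv : ∀ (g : G) (x : N) (v w : E),
      B (a x g) ![actDeriv a g x v, actDeriv a g x w] = B x ![v, w]) :
    ∀ (x : N) (g : G) (v₁ v₂ : E) (ξ₁ ξ₂ : 𝔤),
      -- `Ψ(Q)` with `Q(ξ) = ι_{ξ̂}B`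
      (B (a x g) ![fundVF a ξ₂ (a x g), actDeriv a g x v₁]
        - B (a x g) ![fundVF a ξ₁ (a x g), actDeriv a g x v₂]
        + B (a x g) ![fundVF a ξ₂ (a x g), fundVF a ξ₁ (a x g)])
      =
      -- `−(t*B − s*B)`
      -(B (a x g) ![actDeriv a g x v₁ + fundVF a ξ₁ (a x g),
                    actDeriv a g x v₂ + fundVF a ξ₂ (a x g)]
          - B x ![v₁, v₂]) := by
  intro x g v₁ v₂ ξ₁ ξ₂
  set y := a x g
  set w₁ : E := actDeriv a g x v₁
  set w₂ : E := actDeriv a g x v₂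
  set f₁ : E := fundVF a ξ₁ y
  set f₂ : E := fundVF a ξ₂ y
  have hinv : B x ![v₁, v₂] = B y ![w₁, w₂] := (hBinv g x v₁ v₂).symm
  rw [hinv, alt2_add_left, alt2_add_right, alt2_add_right,
    alt2_swap (B y) f₂ w₁, alt2_swap (B y) f₂ f₁]
  ring

end BCWZ
end

section
/- Let G act on the right on N and let f ∈ (𝔤* ⊗ C^∞(N))^G. Define λ ∈ Ω^1(N × G) by λ(v_x, L_{g*}ξ) = f(Ad_g ξ)(x). Then λ is a simplicial cocycle for the transformation groupoid N ⋊ G ⇉ N: the groupoid coboundary ∂λ ∈ Ω^1((N ⋊ G)_2) vanishes identically. -/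
open Manifold

section BCWZ

variable {𝔤 : Type*} [NormedAddCommGroup 𝔤] [NormedSpace ℝ 𝔤]
  {G : Type*} [TopologicalSpace G] [ChartedSpace 𝔤 G] [Group G]
  [IsTopologicalGroup G] [LieGroup 𝓘(ℝ, 𝔤) (⊤ : ℕ∞) G]
  {E : Type*} [NormedAddCommGroup E] [NormedSpace ℝ E]
  {N : Type*} [TopologicalSpace N] [ChartedSpace E N]
  [IsManifold 𝓘(ℝ, E) (⊤ : ℕ∞) N]

/- STATEMENT 9: For `f ∈ (𝔤* ⊗ C^∞(N))^G`, the 1-form `λ` on `N ⋊ G` defined by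
`λ(v_x, L_{g*}ξ) = f(Ad_g ξ)(x)` is a simplicial cocycle: `∂λ = 0`.
Evaluating `∂λ = ε₀*λ − ε₁*λ + ε₂*λ` on a composable pair of tangent vectors
`((v_x, L_{g*}ξ), (w_y, L_{h*}η))` of the transformation groupoid (with `y = x·g`, and
tangent multiplication `(v_x, L_{gh*}(Ad_{h⁻¹}ξ + η))`), and noting that `λ` does not
depend on the `N`-component of tangent vectors, the claim reads:
`f(Ad_h η)(x·g) − f(Ad_{gh}(Ad_{h⁻¹}ξ + η))(x) + f(Ad_g ξ)(x) = 0`. -/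
theorem lambda_is_simplicial_cocycle
    (a : N → G → N)
    (ha_one : ∀ x, a x 1 = x)
    (ha_mul : ∀ x g h, a (a x g) h = a x (g * h))
    (ha_smooth : ContMDiff ((𝓘(ℝ, E)).prod 𝓘(ℝ, 𝔤)) 𝓘(ℝ, E) (⊤ : ℕ∞)
      (fun p : N × G => a p.1 p.2))
    (f : 𝔤 →ₗ[ℝ] (N → ℝ))
    (hf_equiv : ∀ (g : G) (ξ : 𝔤) (x : N), f (Adj G g ξ) x = f ξ (a x g)) :
    ∀ (x : N) (g h : G) (ξ η : 𝔤),
      f (Adj G h η) (a x g) - f (Adj G (g * h) (Adj G h⁻¹ ξ + η)) x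
        + f (Adj G g ξ) x = 0 := by
  intro x g h ξ η
  have h1 : f (Adj G h η) (a x g) = f η (a x (g * h)) := by
    rw [hf_equiv, ha_mul]
  have h2 : f (Adj G (g * h) (Adj G h⁻¹ ξ + η)) x
      = f ξ (a x g) + f η (a x (g * h)) := by
    rw [hf_equiv, map_add]
    have h3 : f (Adj G h⁻¹ ξ) (a x (g * h)) = f ξ (a x g) := by
      rw [hf_equiv, ha_mul]
      simp
    simp only [Pi.add_apply, h3]
  rw [h1, h2, hf_equiv]
  ring

end BCWZ
end
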